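/- (Correction step bound.) Let F : ℝ^n → ℝ be differentiable, convex, with D_F(x,y) ≤ (L_F/2)‖x−y‖² for all x,y (L_F > 0), let x* ∈ ℝ^n, μ > 0, and set E(x,y) = D_F(x,x*) + (μ/2)‖y − x*‖². Let c₁, c₂, c₃ > 0 and α_k > 0 with α_k² L_F c₂² ≤ (1 + α_k c₁) c₃. Suppose points x_k, y_k, x̂_{k+1}, y_{k+1} satisfy E(x̂_{k+1}, y_{k+1}) − E(x_k, y_k) ≤ −α_k c₁ E(x̂_{k+1}, y_{k+1}) − α_k c₂ ⟨∇F(x̂_{k+1}) − ∇F(x*), y_{k+1} − y_k⟩ − (c₃/2)‖y_{k+1} − y_k‖², and define x_{k+1} by (1 + α_k c₁)(x_{k+1} − x̂_{k+1}) = α_k c₂ (y_{k+1} − y_k). Then E(x_{k+1}, y_{k+1}) ≤ (1 + α_k c₁)^{−1} E(x_k, y_k). -/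

import Mathlib

open Matrix

/-- The continuous linear functional `v ↦ ⟨z, v⟩` on `ℝⁿ`. -/
noncomputable def dpCLM {m : ℕ} (z : Fin m → ℝ) : (Fin m → ℝ) →L[ℝ] ℝ :=
  LinearMap.toContinuousLinearMap
    { toFun := fun v => z ⬝ᵥ v
      map_add' := fun a b => by simp [dotProduct_add]
      map_smul' := fun c a => by simp [dotProduct_smul] }

/-!
Write `s = 1 + α c₁`, `d = y₊ - y` and `x₊ - x̂₊ = t d` with `t = α c₂ / s`. The three-point
identity for Bregman divergences gives
`D(x₊, x*) = D(x̂₊, x*) + t ⟨∇F(x̂₊) - ∇F(x*), d⟩ + D(x₊, x̂₊)`, and the smoothness bound gives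
`D(x₊, x̂₊) ≤ (L/2) t² ‖d‖²`. Multiplying by `s`, the cross term is exactly the one the decay
hypothesis subtracts, and what is left of `‖d‖²` has coefficient `(s L t² - c₃)/2 ≤ 0`.
-/

section Bregman

variable {ι : Type*} [Fintype ι]

def bregman (F : (ι → ℝ) → ℝ) (g : (ι → ℝ) → ι → ℝ) (x y : ι → ℝ) : ℝ :=
  F x - F y - g y ⬝ᵥ (x - y)

theorem bregman_eq_bregman_add_bregman (F : (ι → ℝ) → ℝ) (g : (ι → ℝ) → ι → ℝ) (x y z : ι → ℝ) :
    bregman F g x z = bregman F g y z + (g y - g z) ⬝ᵥ (x - y) + bregman F g x y := by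
  have hsplit : x - z = (y - z) + (x - y) := by abel
  simp only [bregman, hsplit, dotProduct_add, sub_dotProduct]
  ring

theorem bregman_le_of_sub_eq_smul {F : (ι → ℝ) → ℝ} {g : (ι → ℝ) → ι → ℝ} {L : ℝ}
    (hupper : ∀ x y, bregman F g x y ≤ L / 2 * ((x - y) ⬝ᵥ (x - y)))
    {x y z d : ι → ℝ} {t : ℝ} (hxy : x - y = t • d) :
    bregman F g x z ≤
      bregman F g y z + t * ((g y - g z) ⬝ᵥ d) + L / 2 * t ^ 2 * (d ⬝ᵥ d) := by
  have hxy' : L / 2 * ((x - y) ⬝ᵥ (x - y)) = L / 2 * t ^ 2 * (d ⬝ᵥ d) := by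
    rw [hxy, dotProduct_smul, smul_dotProduct, smul_eq_mul, smul_eq_mul]
    ring
  rw [bregman_eq_bregman_add_bregman F g x y z, hxy, dotProduct_smul, smul_eq_mul]
  linarith [hupper x y]

end Bregman

theorem correction_step_bound_general
    {n : ℕ} (μ LF c₁ c₂ c₃ αk : ℝ)
    (hc₁ : 0 < c₁) (hαk : 0 < αk)
    (hstep : αk ^ 2 * LF * c₂ ^ 2 ≤ (1 + αk * c₁) * c₃)
    (F : (Fin n → ℝ) → ℝ) (gradF : (Fin n → ℝ) → (Fin n → ℝ))
    (hupper : ∀ x y : Fin n → ℝ,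
      F x - F y - gradF y ⬝ᵥ (x - y) ≤ LF / 2 * ((x - y) ⬝ᵥ (x - y)))
    (xs xk yk xhat yk1 xk1 : Fin n → ℝ)
    (hdecay :
      ((F xhat - F xs - gradF xs ⬝ᵥ (xhat - xs)) + μ / 2 * ((yk1 - xs) ⬝ᵥ (yk1 - xs)))
        - ((F xk - F xs - gradF xs ⬝ᵥ (xk - xs)) + μ / 2 * ((yk - xs) ⬝ᵥ (yk - xs)))
      ≤ -(αk * c₁ * ((F xhat - F xs - gradF xs ⬝ᵥ (xhat - xs))
            + μ / 2 * ((yk1 - xs) ⬝ᵥ (yk1 - xs))))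
        - αk * c₂ * ((gradF xhat - gradF xs) ⬝ᵥ (yk1 - yk))
        - c₃ / 2 * ((yk1 - yk) ⬝ᵥ (yk1 - yk)))
    (hcorr : (1 + αk * c₁) • (xk1 - xhat) = (αk * c₂) • (yk1 - yk)) :
    (F xk1 - F xs - gradF xs ⬝ᵥ (xk1 - xs)) + μ / 2 * ((yk1 - xs) ⬝ᵥ (yk1 - xs))
      ≤ (1 + αk * c₁)⁻¹ *
        ((F xk - F xs - gradF xs ⬝ᵥ (xk - xs)) + μ / 2 * ((yk - xs) ⬝ᵥ (yk - xs))) := by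
  set s := 1 + αk * c₁
  set d := yk1 - yk
  set t := αk * c₂ / s
  have hs : 0 < s := by positivity
  have hst : s * t = αk * c₂ := mul_div_cancel₀ _ hs.ne'
  have hshift : xk1 - xhat = t • d := by
    rw [← inv_smul_smul₀ hs.ne' (xk1 - xhat), hcorr, smul_smul, inv_mul_eq_div]
  clear_value t
  have hcoef : s * (LF * t ^ 2) ≤ c₃ := by
    have hst2 : s * (LF * t ^ 2) * s = αk ^ 2 * LF * c₂ ^ 2 := by
      linear_combination (LF * (s * t + αk * c₂)) * hst
    rw [← mul_le_mul_iff_of_pos_right hs, hst2, mul_comm c₃]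
    exact hstep
  have hD := bregman_le_of_sub_eq_smul hupper (z := xs) hshift
  have hd : 0 ≤ d ⬝ᵥ d := by simpa using dotProduct_star_self_nonneg d
  simp only [bregman] at hD
  rw [inv_mul_eq_div, le_div_iff₀ hs]
  linear_combination hdecay + s * hD + (1 / 2) * (d ⬝ᵥ d) * hcoef
    + ((gradF xhat - gradF xs) ⬝ᵥ d) * hst

/-- **Correction step bound.**  Let `F` be differentiable, convex, with
`D_F(x,y) ≤ (L_F/2)‖x-y‖²`, and `E(x,y) = D_F(x,x*) + (μ/2)‖y-x*‖²`.
If `E(x̂₊,y₊) - E(x,y) ≤ -αc₁E(x̂₊,y₊) - αc₂⟨∇F(x̂₊) - ∇F(x*), y₊-y⟩ - (c₃/2)‖y₊-y‖²`,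
`α²L_Fc₂² ≤ (1+αc₁)c₃`, and `(1+αc₁)(x₊ - x̂₊) = αc₂(y₊ - y)`, then
`E(x₊,y₊) ≤ (1+αc₁)⁻¹ E(x,y)`. -/
theorem correction_step_bound
    {n : ℕ} (μ LF c₁ c₂ c₃ αk : ℝ) (hμ : 0 < μ) (hLF : 0 < LF)
    (hc₁ : 0 < c₁) (hc₂ : 0 < c₂) (hc₃ : 0 < c₃) (hαk : 0 < αk)
    (hstep : αk ^ 2 * LF * c₂ ^ 2 ≤ (1 + αk * c₁) * c₃)
    (F : (Fin n → ℝ) → ℝ) (gradF : (Fin n → ℝ) → (Fin n → ℝ))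
    (hdiff : ∀ x, HasFDerivAt F (dpCLM (gradF x)) x)
    (hconv : ∀ x y : Fin n → ℝ, 0 ≤ F x - F y - gradF y ⬝ᵥ (x - y))
    (hupper : ∀ x y : Fin n → ℝ,
      F x - F y - gradF y ⬝ᵥ (x - y) ≤ LF / 2 * ((x - y) ⬝ᵥ (x - y)))
    (xs xk yk xhat yk1 xk1 : Fin n → ℝ)
    (hdecay :
      ((F xhat - F xs - gradF xs ⬝ᵥ (xhat - xs)) + μ / 2 * ((yk1 - xs) ⬝ᵥ (yk1 - xs)))
        - ((F xk - F xs - gradF xs ⬝ᵥ (xk - xs)) + μ / 2 * ((yk - xs) ⬝ᵥ (yk - xs)))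
      ≤ -(αk * c₁ * ((F xhat - F xs - gradF xs ⬝ᵥ (xhat - xs))
            + μ / 2 * ((yk1 - xs) ⬝ᵥ (yk1 - xs))))
        - αk * c₂ * ((gradF xhat - gradF xs) ⬝ᵥ (yk1 - yk))
        - c₃ / 2 * ((yk1 - yk) ⬝ᵥ (yk1 - yk)))
    (hcorr : (1 + αk * c₁) • (xk1 - xhat) = (αk * c₂) • (yk1 - yk)) :
    (F xk1 - F xs - gradF xs ⬝ᵥ (xk1 - xs)) + μ / 2 * ((yk1 - xs) ⬝ᵥ (yk1 - xs))
      ≤ (1 + αk * c₁)⁻¹ *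
        ((F xk - F xs - gradF xs ⬝ᵥ (xk - xs)) + μ / 2 * ((yk - xs) ⬝ᵥ (yk - xs))) :=
  correction_step_bound_general μ LF c₁ c₂ c₃ αk hc₁ hαk hstep F gradF hupper xs xk yk xhat yk1 xk1
    hdecay hcorr
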